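/- arXiv:2411.11140 — 5 statements merged into one kernel-verified Lean document; each statement's English description precedes it below -/
import Mathlib

section
/- The number of conjugacy classes of the Heisenberg group H_n over Z/nZ equals the sum over i from 0 to n−1 of gcd(i,n)^2. -/
/-- The Heisenberg group modulo `n`: upper unitriangular `3×3` matrices over `ZMod n`,
encoded by the three entries above the diagonal: `x` in position (1,2), `y` in (2,3),
`z` in (1,3). -/
@[ext] structure Heis (n : ℕ) where
  x : ZMod n
  y : ZMod n
  z : ZMod n

namespace Heis

variable {n : ℕ}

instance : Mul (Heis n) := ⟨fun p q => ⟨p.x + q.x, p.y + q.y, p.z + q.z + p.x * q.y⟩⟩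
instance : One (Heis n) := ⟨⟨0, 0, 0⟩⟩
instance : Inv (Heis n) := ⟨fun p => ⟨-p.x, -p.y, -p.z + p.x * p.y⟩⟩

@[simp] theorem mul_x (p q : Heis n) : (p * q).x = p.x + q.x := rfl
@[simp] theorem mul_y (p q : Heis n) : (p * q).y = p.y + q.y := rfl
@[simp] theorem mul_z (p q : Heis n) : (p * q).z = p.z + q.z + p.x * q.y := rfl
@[simp] theorem one_x : (1 : Heis n).x = 0 := rfl
@[simp] theorem one_y : (1 : Heis n).y = 0 := rfl
@[simp] theorem one_z : (1 : Heis n).z = 0 := rfl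
@[simp] theorem inv_x (p : Heis n) : p⁻¹.x = -p.x := rfl
@[simp] theorem inv_y (p : Heis n) : p⁻¹.y = -p.y := rfl
@[simp] theorem inv_z (p : Heis n) : p⁻¹.z = -p.z + p.x * p.y := rfl

instance : Group (Heis n) where
  mul_assoc a b c := by ext <;> simp <;> ring
  one_mul a := by ext <;> simp
  mul_one a := by ext <;> simp
  inv_mul_cancel a := by ext <;> simp <;> ring

/-- The generator `a`: the matrix with (1,2)-entry 1. -/
def a : Heis n := ⟨1, 0, 0⟩
/-- The generator `b`: the matrix with (2,3)-entry 1. -/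
def b : Heis n := ⟨0, 1, 0⟩
/-- The commutator `T = [a,b]`: the matrix with (1,3)-entry 1. -/
def T : Heis n := ⟨0, 0, 1⟩

theorem T_eq_commutator : (T : Heis n) = a * b * a⁻¹ * b⁻¹ := by
  ext <;> simp [a, b, T]

end Heis


open Finset ArithmeticFunction

def phiAF : ArithmeticFunction ℕ := ⟨Nat.totient, Nat.totient_zero⟩

@[simp] lemma phiAF_apply (n : ℕ) : phiAF n = Nat.totient n := rfl

lemma sum_gcd_eq (n : ℕ) (f : ℕ → ℕ) (hn : n ≠ 0) :
    ∑ i ∈ range n, f (Nat.gcd n i) =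
      ∑ d ∈ n.divisors, Nat.totient (n / d) * f d := by
  rw [← Finset.sum_fiberwise_of_maps_to (g := fun i => Nat.gcd n i)
      (t := n.divisors) (fun x _ => Nat.mem_divisors.2 ⟨Nat.gcd_dvd_left _ _, hn⟩)]
  refine Finset.sum_congr rfl fun d hd => ?_
  rw [Nat.totient_div_of_dvd (Nat.dvd_of_mem_divisors hd)]
  rw [Finset.sum_congr rfl (fun i hi => by rw [(Finset.mem_filter.1 hi).2]),
    Finset.sum_const, smul_eq_mul]

lemma pmul_id_phi_mul_id : (ArithmeticFunction.pmul .id phiAF) * .id = ArithmeticFunction.pmul .id .id := by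
  ext n
  simp only [mul_apply, pmul_apply, id_apply]
  rw [Nat.sum_divisorsAntidiagonal (fun a b => a * phiAF a * b)]
  have : ∀ d ∈ n.divisors, d * phiAF d * (n / d) = Nat.totient d * n := by
    intro d hd
    rw [mul_comm d (phiAF d), mul_assoc, Nat.mul_div_cancel' (Nat.dvd_of_mem_divisors hd)]
    rfl
  rw [Finset.sum_congr rfl this, ← Finset.sum_mul, Nat.sum_totient]

lemma sum_gcd_periodic (m k : ℕ) :
    ∑ y ∈ range (k * m), Nat.gcd m y = k * ∑ y ∈ range m, Nat.gcd m y := by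
  induction k with
  | zero => simp
  | succ k ih =>
    rw [Nat.succ_mul, Finset.sum_range_add, ih, Nat.succ_mul]
    congr 1
    refine Finset.sum_congr rfl fun i _ => ?_
    rw [add_comm, Nat.gcd_add_mul_right_right]

lemma gcd_sum_sq (n : ℕ) (hn : n ≠ 0) :
    ∑ x ∈ range n, ∑ y ∈ range n, Nat.gcd n (Nat.gcd x y)
      = ∑ i ∈ range n, Nat.gcd i n ^ 2 := by
  set B : ArithmeticFunction ℕ := ArithmeticFunction.id * phiAF with hB
  have hinner : ∀ x ∈ range n, (∑ y ∈ range n, Nat.gcd n (Nat.gcd x y))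
      = (n / Nat.gcd n x) * B (Nat.gcd n x) := by
    intro x _
    have hd : Nat.gcd n x ∣ n := Nat.gcd_dvd_left _ _
    have hd0 : Nat.gcd n x ≠ 0 := fun h => hn (Nat.eq_zero_of_gcd_eq_zero_left h)
    calc ∑ y ∈ range n, Nat.gcd n (Nat.gcd x y)
        = ∑ y ∈ range ((n / Nat.gcd n x) * Nat.gcd n x), Nat.gcd (Nat.gcd n x) y := by
          rw [Nat.div_mul_cancel hd]
          exact Finset.sum_congr rfl fun y _ => (Nat.gcd_assoc n x y).symm
      _ = (n / Nat.gcd n x) * ∑ y ∈ range (Nat.gcd n x), Nat.gcd (Nat.gcd n x) y :=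
          sum_gcd_periodic _ _
      _ = (n / Nat.gcd n x) * B (Nat.gcd n x) := by
          congr 1
          rw [show (∑ y ∈ range (Nat.gcd n x), Nat.gcd (Nat.gcd n x) y)
              = ∑ y ∈ range (Nat.gcd n x), _root_.id (Nat.gcd (Nat.gcd n x) y) from rfl,
            sum_gcd_eq _ _root_.id hd0, hB, ArithmeticFunction.mul_apply,
            Nat.sum_divisorsAntidiagonal (f := fun a b => ArithmeticFunction.id a * phiAF b)]
          exact Finset.sum_congr rfl fun d _ => by
            simp [mul_comm]
  rw [Finset.sum_congr rfl hinner, sum_gcd_eq n (fun d => (n / d) * B d) hn]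
  have hL : ∑ d ∈ n.divisors, Nat.totient (n / d) * ((n / d) * B d)
      = ((ArithmeticFunction.pmul .id phiAF) * B) n := by
    rw [ArithmeticFunction.mul_apply,
      Nat.sum_divisorsAntidiagonal' (f := fun a b => (ArithmeticFunction.pmul .id phiAF) a * B b)]
    exact Finset.sum_congr rfl fun d _ => by
      simp only [pmul_apply, id_apply, phiAF_apply]
      ring
  rw [hL, ← mul_assoc, pmul_id_phi_mul_id]
  have hR : ∑ i ∈ range n, Nat.gcd i n ^ 2
      = ((ArithmeticFunction.pmul .id .id) * phiAF) n := by
    have : ∀ i ∈ range n, Nat.gcd i n ^ 2 = (fun d => d ^ 2) (Nat.gcd n i) := by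
      intro i _; rw [Nat.gcd_comm]
    rw [Finset.sum_congr rfl this, sum_gcd_eq n (fun d => d ^ 2) hn,
      ArithmeticFunction.mul_apply,
      Nat.sum_divisorsAntidiagonal (f := fun a b => (ArithmeticFunction.pmul .id .id) a * phiAF b)]
    exact Finset.sum_congr rfl fun d _ => by
      simp only [pmul_apply, id_apply, phiAF_apply, sq]
      ring
  rw [hR]


-- auxiliary
section Aux
variable {n : ℕ}

def heisEquiv : Heis n ≃ ZMod n × ZMod n × ZMod n where
  toFun p := (p.x, p.y, p.z)
  invFun t := ⟨t.1, t.2.1, t.2.2⟩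
  left_inv _ := rfl
  right_inv _ := rfl

noncomputable instance [NeZero n] : Fintype (Heis n) := Fintype.ofEquiv _ heisEquiv.symm

lemma heis_card [NeZero n] : Nat.card (Heis n) = n ^ 3 := by
  rw [Nat.card_congr heisEquiv, Nat.card_prod, Nat.card_prod, Nat.card_zmod]; ring

lemma heis_commute_iff (p q : Heis n) : Commute p q ↔ p.x * q.y = q.x * p.y := by
  constructor
  · intro h
    have := congrArg Heis.z h
    simp only [Heis.mul_z] at this
    rw [add_comm q.z p.z] at this
    exact add_left_cancel this
  · intro h
    ext <;> simp [add_comm] <;> exact h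

lemma heis_conj (c p : Heis n) :
    c * p * c⁻¹ = ⟨p.x, p.y, p.z + c.x * p.y - p.x * c.y⟩ := by
  ext <;> simp <;> ring

lemma infinite_conjClasses_zero : Infinite (ConjClasses (Heis 0)) := by
  refine Infinite.of_injective (fun z : ℤ => ConjClasses.mk (⟨0, 0, (z : ZMod 0)⟩ : Heis 0)) ?_
  intro z w h
  rw [ConjClasses.mk_eq_mk_iff_isConj, isConj_iff] at h
  obtain ⟨c, hc⟩ := h
  rw [heis_conj] at hc
  have := congrArg Heis.z hc
  simp at this
  have h' : z + 0 = w := by exact_mod_cast this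
  simpa using h'

end Aux

section Count
open AddSubgroup
variable {n : ℕ} [NeZero n]

lemma card_pairs (x y : ZMod n) :
    Nat.card {b : ZMod n × ZMod n // x * b.2 = b.1 * y} =
      n * Nat.gcd n (Nat.gcd x.val y.val) := by
  classical
  set g : ℕ := Nat.gcd x.val y.val with hg
  set d : ZMod n := (g : ZMod n) with hd
  set f : ZMod n × ZMod n →+ ZMod n :=
    { toFun := fun b => b.1 * y - x * b.2
      map_zero' := by simp
      map_add' := by intro a b; simp; ring } with hf
  have hker : Nat.card {b : ZMod n × ZMod n // x * b.2 = b.1 * y} = Nat.card f.ker := by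
    apply Nat.card_congr
    apply Equiv.subtypeEquivRight
    intro b
    rw [AddMonoidHom.mem_ker, hf]
    simp only [AddMonoidHom.coe_mk, ZeroHom.coe_mk]
    rw [sub_eq_zero, eq_comm]
  have mul_d_mem : ∀ c : ZMod n, c * d ∈ zmultiples d := by
    intro c
    refine AddSubgroup.mem_zmultiples_iff.2 ⟨(c.val : ℤ), ?_⟩
    rw [zsmul_eq_mul, Int.cast_natCast, ZMod.natCast_val, ZMod.cast_id]
  have hsub : ∀ (r s : ZMod n), s ∈ zmultiples d → r * s ∈ zmultiples d := by
    intro r s hs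
    obtain ⟨m, hm⟩ := AddSubgroup.mem_zmultiples_iff.1 hs
    rw [← hm, zsmul_eq_mul, ← mul_assoc]
    exact mul_d_mem _
  have mem_of_dvd : ∀ a : ZMod n, g ∣ a.val → a ∈ zmultiples d := by
    intro a ha
    obtain ⟨k, hk⟩ := ha
    have ha2 : a = (k : ZMod n) * d := by
      have h0 : ((a.val : ℕ) : ZMod n) = a := ZMod.natCast_rightInverse a
      rw [← h0, hk, Nat.cast_mul, hd, mul_comm]
    rw [ha2]
    exact mul_d_mem _
  have hrange : f.range = zmultiples d := by
    apply le_antisymm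
    · rintro _ ⟨b, rfl⟩
      show b.1 * y - x * b.2 ∈ zmultiples d
      have h1 := hsub b.1 y (mem_of_dvd y (Nat.gcd_dvd_right _ _))
      have h2 : x * b.2 ∈ zmultiples d := by
        rw [mul_comm]
        exact hsub b.2 x (mem_of_dvd x (Nat.gcd_dvd_left _ _))
      exact sub_mem h1 h2
    · rw [zmultiples_le]
      refine ⟨(((Nat.gcdB x.val y.val : ℤ) : ZMod n), -((Nat.gcdA x.val y.val : ℤ) : ZMod n)), ?_⟩
      show ((Nat.gcdB x.val y.val : ℤ) : ZMod n) * y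
          - x * -((Nat.gcdA x.val y.val : ℤ) : ZMod n) = d
      have h := Nat.gcd_eq_gcd_ab x.val y.val
      have h2 := congrArg (fun t : ℤ => ((t : ℤ) : ZMod n)) h
      simp only [Int.cast_add, Int.cast_mul, Int.cast_natCast] at h2
      have hx : ((x.val : ℕ) : ZMod n) = x := ZMod.natCast_rightInverse x
      have hy : ((y.val : ℕ) : ZMod n) = y := ZMod.natCast_rightInverse y
      rw [hx, hy] at h2
      rw [hd, hg]
      linear_combination -h2
  have hrangecard : Nat.card f.range = n / Nat.gcd n g := by
    rw [hrange, Nat.card_zmultiples, hd, ZMod.addOrderOf_coe g (NeZero.ne n)]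
  have hiso := Nat.card_congr (QuotientAddGroup.quotientKerEquivRange f).toEquiv
  have htot := AddSubgroup.card_eq_card_quotient_mul_card_addSubgroup f.ker
  rw [hiso, hrangecard] at htot
  have hcardG : Nat.card (ZMod n × ZMod n) = n * n := by
    rw [Nat.card_prod, Nat.card_zmod]
  rw [hcardG] at htot
  set gn := Nat.gcd n g with hgn
  have hdvd : gn ∣ n := Nat.gcd_dvd_left _ _
  have hq : gn * (n / gn) = n := Nat.mul_div_cancel' hdvd
  have hq0 : 0 < n / gn := by
    rcases Nat.eq_zero_or_pos (n / gn) with h0 | h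
    · rw [h0, mul_zero] at hq; exact absurd hq.symm (NeZero.ne n)
    · exact h
  rw [hker]
  apply Nat.eq_of_mul_eq_mul_left hq0
  rw [← htot]
  calc n * n = (gn * (n / gn)) * n := by rw [hq]
    _ = n / gn * (n * gn) := by ring

end Count

section Main
open Finset
variable {n : ℕ} [NeZero n]

lemma zmod_sum (f : ℕ → ℕ) : ∑ a : ZMod n, f a.val = ∑ i ∈ range n, f i := by
  apply Finset.sum_nbij' (i := fun (a : ZMod n) => a.val) (j := fun i => (i : ZMod n))
  · intro a _; exact Finset.mem_range.2 (ZMod.val_lt a)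
  · intro i _; exact Finset.mem_univ _
  · intro a _; exact ZMod.natCast_rightInverse a
  · intro i hi; exact ZMod.val_cast_of_lt (Finset.mem_range.1 hi)
  · intro a _; rfl

def commEquiv :
    {p : Heis n × Heis n // p.1.x * p.2.y = p.2.x * p.1.y} ≃
      Σ a : ZMod n × ZMod n,
        {b : ZMod n × ZMod n // a.1 * b.2 = b.1 * a.2} × (ZMod n × ZMod n) where
  toFun p := ⟨(p.1.1.x, p.1.1.y), ⟨⟨(p.1.2.x, p.1.2.y), p.2⟩, (p.1.1.z, p.1.2.z)⟩⟩
  invFun q := ⟨(⟨q.1.1, q.1.2, q.2.2.1⟩, ⟨q.2.1.1.1, q.2.1.1.2, q.2.2.2⟩), q.2.1.2⟩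
  left_inv := by rintro ⟨⟨⟨_,_,_⟩,⟨_,_,_⟩⟩, _⟩; rfl
  right_inv := by rintro ⟨⟨_,_⟩, ⟨⟨⟨_,_⟩,_⟩, ⟨_,_⟩⟩⟩; rfl

lemma card_comm_pairs :
    Nat.card {p : Heis n × Heis n // Commute p.1 p.2}
      = n ^ 3 * ∑ i ∈ range n, ∑ j ∈ range n, Nat.gcd n (Nat.gcd i j) := by
  classical
  rw [Nat.card_congr (Equiv.subtypeEquivRight
      (fun p : Heis n × Heis n => heis_commute_iff p.1 p.2)),
    Nat.card_congr (commEquiv (n := n)), Nat.card_eq_fintype_card, Fintype.card_sigma]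
  have step : ∀ a : ZMod n × ZMod n,
      Fintype.card ({b : ZMod n × ZMod n // a.1 * b.2 = b.1 * a.2} × (ZMod n × ZMod n))
        = (n * Nat.gcd n (Nat.gcd a.1.val a.2.val)) * (n * n) := by
    intro a
    rw [← Nat.card_eq_fintype_card, Nat.card_prod, Nat.card_prod, Nat.card_zmod, card_pairs]
  rw [Finset.sum_congr rfl (fun a _ => step a), Fintype.sum_prod_type]
  calc (∑ x : ZMod n, ∑ y : ZMod n, (n * Nat.gcd n (Nat.gcd x.val y.val)) * (n * n))
      = ∑ x : ZMod n, ∑ y : ZMod n, n ^ 3 * Nat.gcd n (Nat.gcd x.val y.val) := by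
        refine Finset.sum_congr rfl fun x _ => Finset.sum_congr rfl fun y _ => by ring
    _ = ∑ x : ZMod n, n ^ 3 * ∑ j ∈ range n, Nat.gcd n (Nat.gcd x.val j) := by
        refine Finset.sum_congr rfl fun x _ => ?_
        rw [zmod_sum (fun j => n ^ 3 * Nat.gcd n (Nat.gcd x.val j)), Finset.mul_sum]
    _ = ∑ x : ZMod n, (fun i => n ^ 3 * ∑ j ∈ range n, Nat.gcd n (Nat.gcd i j)) x.val := rfl
    _ = ∑ i ∈ range n, n ^ 3 * ∑ j ∈ range n, Nat.gcd n (Nat.gcd i j) :=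
        zmod_sum (fun i => n ^ 3 * ∑ j ∈ range n, Nat.gcd n (Nat.gcd i j))
    _ = n ^ 3 * ∑ i ∈ range n, ∑ j ∈ range n, Nat.gcd n (Nat.gcd i j) := by
        rw [Finset.mul_sum]

end Main

/-- The number of conjugacy classes of `H_n` equals `∑_{i=0}^{n-1} gcd(i,n)^2`. -/
theorem heis_conjClasses_card (n : ℕ) :
    Nat.card (ConjClasses (Heis n)) = ∑ i ∈ Finset.range n, Nat.gcd i n ^ 2 := by
  rcases Nat.eq_zero_or_pos n with rfl | hn
  · have := infinite_conjClasses_zero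
    rw [Finset.range_zero, Finset.sum_empty, Nat.card_eq_zero_of_infinite]
  · haveI : NeZero n := ⟨hn.ne'⟩
    have burn := card_comm_eq_card_conjClasses_mul_card (Heis n)
    rw [card_comm_pairs, heis_card, gcd_sum_sq n (NeZero.ne n)] at burn
    have h3 : 0 < n ^ 3 := pow_pos hn 3
    have key : Nat.card (ConjClasses (Heis n)) * n ^ 3
        = (∑ i ∈ Finset.range n, Nat.gcd i n ^ 2) * n ^ 3 := by
      rw [← burn]; ring
    exact Nat.eq_of_mul_eq_mul_right h3 key
end

section
/- Two elements of the Heisenberg group H_n over Z/nZ, written as matrices with (1,2)-entry i, (2,3)-entry j, (1,3)-entry k and (1,2)-entry i′, (2,3)-entry j′, (1,3)-entry k′, are conjugate in H_n if and only if i = i′, j = j′, and k ≡ k′ mod gcd(i, j, n). -/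
/-- Two elements of `H_n` with entries `(i,j,k)` and `(i',j',k')` are conjugate iff
`i = i'`, `j = j'`, and `k ≡ k' mod gcd(i,j,n)` (gcd taken with integer representatives). -/
theorem heis_isConj_iff (n : ℕ) (hn : 0 < n) (p q : Heis n) :
    IsConj p q ↔
      p.x = q.x ∧ p.y = q.y ∧
        p.z.val ≡ q.z.val [MOD Nat.gcd (Nat.gcd p.x.val p.y.val) n] := by
  haveI : NeZero n := ⟨hn.ne'⟩
  set d : ℕ := Nat.gcd (Nat.gcd p.x.val p.y.val) n with hd
  have hdn : (d : ℤ) ∣ (n : ℤ) := Int.natCast_dvd_natCast.mpr (Nat.gcd_dvd_right _ _)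
  have hdi : (d : ℤ) ∣ (p.x.val : ℤ) :=
    Int.natCast_dvd_natCast.mpr (dvd_trans (Nat.gcd_dvd_left _ _) (Nat.gcd_dvd_left _ _))
  have hdj : (d : ℤ) ∣ (p.y.val : ℤ) :=
    Int.natCast_dvd_natCast.mpr (dvd_trans (Nat.gcd_dvd_left _ _) (Nat.gcd_dvd_right _ _))
  have castval : ∀ a : ZMod n, ((a.val : ℕ) : ZMod n) = a := by
    intro a
    rw [ZMod.natCast_val, ZMod.cast_id]
  rw [isConj_iff]
  constructor
  · rintro ⟨c, hc⟩
    rw [mul_inv_eq_iff_eq_mul] at hc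
    have hcx := congrArg Heis.x hc
    have hcy := congrArg Heis.y hc
    have hcz := congrArg Heis.z hc
    simp only [Heis.mul_x, Heis.mul_y, Heis.mul_z] at hcx hcy hcz
    have hx : p.x = q.x := by linear_combination hcx
    have hy : p.y = q.y := by linear_combination hcy
    refine ⟨hx, hy, ?_⟩
    have hz : q.z - p.z = c.x * p.y - p.x * c.y := by
      rw [← hx] at hcz; linear_combination -hcz
    have key : ((q.z.val - p.z.val - (c.x.val * p.y.val - p.x.val * c.y.val) : ℤ) : ZMod n) = 0 := by
      push_cast
      rw [castval, castval, castval, castval, castval, castval]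
      linear_combination hz
    have hn' : (n : ℤ) ∣ (q.z.val - p.z.val - (c.x.val * p.y.val - p.x.val * c.y.val) : ℤ) :=
      (ZMod.intCast_zmod_eq_zero_iff_dvd _ _).mp key
    have : (d : ℤ) ∣ ((q.z.val : ℤ) - p.z.val) := by
      have h1 : (d : ℤ) ∣ (q.z.val - p.z.val - (c.x.val * p.y.val - p.x.val * c.y.val) : ℤ) :=
        hdn.trans hn'
      have h2 : (d : ℤ) ∣ (c.x.val * p.y.val - p.x.val * c.y.val : ℤ) :=
        Dvd.dvd.sub (hdj.mul_left _) (hdi.mul_right _)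
      have := h1.add h2
      simpa using this
    exact (Nat.modEq_iff_dvd).mpr this
  · rintro ⟨hx, hy, hmod⟩
    have hdvd : (d : ℤ) ∣ ((q.z.val : ℤ) - p.z.val) := (Nat.modEq_iff_dvd).mp hmod
    obtain ⟨m, hm⟩ := hdvd
    set g : ℕ := Nat.gcd p.x.val p.y.val with hg
    have hb1 : (d : ℤ) = g * Nat.gcdA g n + n * Nat.gcdB g n := Nat.gcd_eq_gcd_ab g n
    have hb2 : (g : ℤ) = p.x.val * Nat.gcdA p.x.val p.y.val + p.y.val * Nat.gcdB p.x.val p.y.val :=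
      Nat.gcd_eq_gcd_ab _ _
    set A : ℤ := Nat.gcdA p.x.val p.y.val * Nat.gcdA g n
    set B : ℤ := Nat.gcdB p.x.val p.y.val * Nat.gcdA g n
    have hdexp : (d : ℤ) = p.x.val * A + p.y.val * B + n * Nat.gcdB g n := by
      rw [hb1, hb2]; ring
    refine ⟨⟨((m * B : ℤ) : ZMod n), ((-(m * A) : ℤ) : ZMod n), 0⟩, ?_⟩
    have keyz : q.z - p.z = ((m * B : ℤ) : ZMod n) * p.y - p.x * ((-(m * A) : ℤ) : ZMod n) := by
      have h0 : ((q.z.val - p.z.val : ℤ) : ZMod n) = q.z - p.z := by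
        push_cast; rw [castval, castval]
      rw [← h0, hm, hdexp]
      push_cast
      rw [castval, castval]
      simp only [ZMod.natCast_self]
      ring
    rw [mul_inv_eq_iff_eq_mul]
    ext
    · simp [hx, add_comm]
    · simp [hy, add_comm]
    · simp only [Heis.mul_z, Heis.mul_x, Heis.mul_y]
      rw [← hx]
      linear_combination -keyz
end

section
/- For every positive integer n, the identity ∑_{i=0}^{n−1} gcd(i,n)^2 = ∑_{i=0}^{n−1} ∑_{j=0}^{n−1} gcd(gcd(i,j),n) = ∑_{d | n} d^2 φ(n/d) holds, where φ is Euler's totient function. -/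
open Finset

lemma card_dvd_range {n e : ℕ} (he : 0 < e) (hen : e ∣ n) :
    #{x ∈ range n | e ∣ x} = n / e := by
  rw [← Finset.card_range (n / e)]
  apply Finset.card_bij (fun x _ => x / e)
  · rintro a ha
    simp only [mem_filter, mem_range] at ha
    exact mem_range.2 (Nat.div_lt_div_of_lt_of_dvd hen ha.1)
  · rintro a ha b hb h
    simp only [mem_filter, mem_range] at ha hb
    obtain ⟨x, rfl⟩ := ha.2; obtain ⟨y, rfl⟩ := hb.2
    rw [Nat.mul_div_cancel_left _ he, Nat.mul_div_cancel_left _ he] at h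
    rw [h]
  · rintro b hb
    refine ⟨e * b, ?_, by rw [Nat.mul_div_cancel_left _ he]⟩
    simp only [mem_filter, mem_range]
    refine ⟨?_, ⟨b, rfl⟩⟩
    calc e * b < e * (n / e) := (Nat.mul_lt_mul_left he).2 (mem_range.1 hb)
      _ = n := Nat.mul_div_cancel' hen

lemma sum_gcd_sq (n : ℕ) (hn : 0 < n) :
    ∑ i ∈ Finset.range n, Nat.gcd i n ^ 2 =
      ∑ d ∈ n.divisors, d ^ 2 * Nat.totient (n / d) := by
  rw [← Finset.sum_fiberwise_of_maps_to (g := fun i => n.gcd i)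
    (fun i _ => Nat.mem_divisors.2 ⟨Nat.gcd_dvd_left n i, hn.ne'⟩) (fun i => Nat.gcd i n ^ 2)]
  refine Finset.sum_congr rfl fun d hd => ?_
  rw [Finset.sum_congr rfl (fun i hi => ?_), Finset.sum_const, smul_eq_mul,
    Nat.totient_div_of_dvd (Nat.mem_divisors.1 hd).1, mul_comm]
  rw [Nat.gcd_comm, (Finset.mem_filter.1 hi).2]

/-- For `n > 0`:
`∑_{i<n} gcd(i,n)² = ∑_{i<n} ∑_{j<n} gcd(gcd(i,j),n) = ∑_{d∣n} d² φ(n/d)`. -/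
theorem gcd_square_sum (n : ℕ) (hn : 0 < n) :
    (∑ i ∈ Finset.range n, Nat.gcd i n ^ 2 =
        ∑ i ∈ Finset.range n, ∑ j ∈ Finset.range n, Nat.gcd (Nat.gcd i j) n) ∧
      ∑ i ∈ Finset.range n, Nat.gcd i n ^ 2 =
        ∑ d ∈ n.divisors, d ^ 2 * Nat.totient (n / d) := by
  have h2 := sum_gcd_sq n hn
  refine ⟨?_, h2⟩
  have key : ∀ i ∈ range n, ∀ j ∈ range n,
      Nat.gcd (Nat.gcd i j) n = ∑ e ∈ n.divisors, if e ∣ i ∧ e ∣ j then Nat.totient e else 0 := by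
    intro i _ j _
    have hpos : 0 < Nat.gcd (Nat.gcd i j) n := Nat.gcd_pos_of_pos_right _ hn
    rw [← Nat.sum_totient (Nat.gcd (Nat.gcd i j) n), ← Finset.sum_filter]
    apply Finset.sum_congr _ fun _ _ => rfl
    ext e
    simp only [Nat.mem_divisors, mem_filter]
    constructor
    · intro h
      exact ⟨⟨h.1.trans (Nat.gcd_dvd_right _ _), hn.ne'⟩,
        (h.1.trans ((Nat.gcd_dvd_left _ _).trans (Nat.gcd_dvd_left _ _))),
        (h.1.trans ((Nat.gcd_dvd_left _ _).trans (Nat.gcd_dvd_right _ _)))⟩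
    · rintro ⟨⟨hen, _⟩, hei, hej⟩
      exact ⟨Nat.dvd_gcd (Nat.dvd_gcd hei hej) hen, hpos.ne'⟩
  have inner : ∀ e ∈ n.divisors,
      ∑ i ∈ range n, ∑ j ∈ range n, (if e ∣ i ∧ e ∣ j then Nat.totient e else 0)
        = Nat.totient e * ((n / e) * (n / e)) := by
    intro e he
    obtain ⟨hen, _⟩ := Nat.mem_divisors.1 he
    have he0 : 0 < e := Nat.pos_of_dvd_of_pos hen hn
    calc ∑ i ∈ range n, ∑ j ∈ range n, (if e ∣ i ∧ e ∣ j then Nat.totient e else 0)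
        = ∑ i ∈ range n, (if e ∣ i then
            ∑ j ∈ range n, (if e ∣ j then Nat.totient e else 0) else 0) := by
          refine Finset.sum_congr rfl fun i _ => ?_
          by_cases h : e ∣ i
          · simp [h]
          · simp [h]
      _ = ∑ i ∈ {x ∈ range n | e ∣ x}, ∑ j ∈ {x ∈ range n | e ∣ x}, Nat.totient e := by
          rw [← Finset.sum_filter]
          exact Finset.sum_congr rfl fun i _ => (Finset.sum_filter _ _).symm
      _ = Nat.totient e * ((n / e) * (n / e)) := by
          rw [Finset.sum_const, Finset.sum_const, card_dvd_range he0 hen, smul_eq_mul,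
            smul_eq_mul]
          ring
  calc ∑ i ∈ range n, Nat.gcd i n ^ 2
      = ∑ d ∈ n.divisors, d ^ 2 * Nat.totient (n / d) := h2
    _ = ∑ d ∈ n.divisors, (n / d) ^ 2 * Nat.totient (n / (n / d)) := (Nat.sum_div_divisors n
          (fun d => d ^ 2 * Nat.totient (n / d))).symm
    _ = ∑ e ∈ n.divisors, Nat.totient e * ((n / e) * (n / e)) := by
        refine Finset.sum_congr rfl fun d hd => ?_
        obtain ⟨hdn, hn0⟩ := Nat.mem_divisors.1 hd
        rw [Nat.div_div_self hdn hn0]; ring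
    _ = ∑ e ∈ n.divisors, ∑ i ∈ range n, ∑ j ∈ range n,
          (if e ∣ i ∧ e ∣ j then Nat.totient e else 0) :=
        (Finset.sum_congr rfl inner).symm
    _ = ∑ i ∈ range n, ∑ j ∈ range n, ∑ e ∈ n.divisors,
          (if e ∣ i ∧ e ∣ j then Nat.totient e else 0) := by
        rw [Finset.sum_comm]
        exact Finset.sum_congr rfl fun i _ => Finset.sum_comm
    _ = ∑ i ∈ range n, ∑ j ∈ range n, Nat.gcd (Nat.gcd i j) n :=
        Finset.sum_congr rfl fun i hi => Finset.sum_congr rfl fun j hj => (key i hi j hj).symm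
end

section
/- Let F be the free group on a, b and let N be the normal closure of {a^n, b^n, [a,[a,b]], [b,[a,b]]} in F. If n is odd, then (ab)^n ∈ N; if n is even, then (ab)^n ∉ N but (ab)^{2n} ∈ N. -/
section Aux

variable {G : Type*} [Group G]

/-- `T^k * B^k * A = A * B^k` when `T = [A,B]` commutes with `B`. -/
lemma aux_comm (A B T : G) (hT : T = A * B * A⁻¹ * B⁻¹) (hTB : Commute T B) :
    ∀ k : ℕ, T ^ k * B ^ k * A = A * B ^ k := by
  intro k
  induction k with
  | zero => simp
  | succ k ih =>
    have hBA : B * A = T⁻¹ * (A * B) := by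
      rw [hT]; group
    have hTBk : Commute (T⁻¹) (B ^ k) := (hTB.pow_right k).inv_left
    have h1 : B ^ (k+1) * A = B ^ k * (T⁻¹ * (A * B)) := by
      rw [pow_succ, mul_assoc, hBA]
    have h2 : B ^ k * T⁻¹ = T⁻¹ * B ^ k := hTBk.symm.eq
    calc T ^ (k+1) * B ^ (k+1) * A
        = T ^ (k+1) * (B ^ (k+1) * A) := by group
      _ = T ^ (k+1) * (B ^ k * T⁻¹ * (A * B)) := by rw [h1]; group
      _ = T ^ (k+1) * (T⁻¹ * B ^ k * (A * B)) := by rw [h2]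
      _ = T ^ k * B ^ k * A * B := by group
      _ = A * B ^ k * B := by rw [ih]
      _ = A * B ^ (k+1) := by rw [pow_succ]; group

lemma aux_pow (A B T : G) (hT : T = A * B * A⁻¹ * B⁻¹) (hTA : Commute T A)
    (hTB : Commute T B) :
    ∀ k : ℕ, (A * B) ^ k * T ^ (k.choose 2) = A ^ k * B ^ k := by
  intro k
  induction k with
  | zero => simp
  | succ k ih =>
    have hc : (k+1).choose 2 = k + k.choose 2 := by
      rw [Nat.choose_succ_succ, Nat.choose_one_right]
    have key := aux_comm A B T hT hTB k
    have e1 : (A * B) * T ^ (k.choose 2) = T ^ (k.choose 2) * (A * B) :=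
      ((hTA.mul_right hTB).pow_left _).symm.eq
    have e2 : A * T ^ k = T ^ k * A := (hTA.pow_left k).symm.eq
    have e3 : B ^ k * T ^ k = T ^ k * B ^ k := ((hTB.pow_left k).pow_right k).symm.eq
    calc (A * B) ^ (k+1) * T ^ ((k+1).choose 2)
        = (A * B) ^ k * ((A * B) * T ^ (k.choose 2)) * T ^ k := by
          rw [hc, pow_succ]; group
      _ = (A * B) ^ k * (T ^ (k.choose 2) * (A * B)) * T ^ k := by rw [e1]
      _ = ((A * B) ^ k * T ^ (k.choose 2)) * ((A * B) * T ^ k) := by group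
      _ = (A ^ k * B ^ k) * ((A * B) * T ^ k) := by rw [ih]
      _ = A ^ k * B ^ k * A * (B * T ^ k) := by group
      _ = A ^ k * B ^ k * A * (T ^ k * B) := by rw [← (hTB.pow_left k).eq]
      _ = A ^ k * (B ^ k * (A * T ^ k)) * B := by group
      _ = A ^ k * (B ^ k * T ^ k * A) * B := by rw [e2]; group
      _ = A ^ k * (T ^ k * B ^ k * A) * B := by rw [e3]
      _ = A ^ k * (A * B ^ k) * B := by rw [key]
      _ = A ^ (k+1) * B ^ (k+1) := by rw [pow_succ' A, pow_succ B]; group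

end Aux

namespace Heis

lemma a_pow {n : ℕ} (k : ℕ) : (a : Heis n) ^ k = ⟨(k : ZMod n), 0, 0⟩ := by
  induction k with
  | zero => ext <;> simp
  | succ k ih => rw [pow_succ, ih]; ext <;> simp [a] <;> push_cast <;> ring

lemma b_pow {n : ℕ} (k : ℕ) : (b : Heis n) ^ k = ⟨0, (k : ZMod n), 0⟩ := by
  induction k with
  | zero => ext <;> simp
  | succ k ih => rw [pow_succ, ih]; ext <;> simp [b] <;> push_cast <;> ring

lemma ab_pow {n : ℕ} (k : ℕ) :
    (a * b : Heis n) ^ k = ⟨(k : ZMod n), (k : ZMod n), (k : ZMod n) + (k.choose 2 : ZMod n)⟩ := by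
  induction k with
  | zero => ext <;> simp
  | succ k ih =>
    rw [pow_succ, ih]
    have hc : (k+1).choose 2 = k + k.choose 2 := by
      rw [Nat.choose_succ_succ, Nat.choose_one_right]
    ext <;> simp [a, b, hc] <;> push_cast <;> ring

end Heis

/-- Let `N` be the normal closure of `{a^n, b^n, [a,[a,b]], [b,[a,b]]}` in the free group
on `a,b` (n positive). If `n` is odd then `(ab)^n ∈ N`; if `n` is even then `(ab)^n ∉ N`
but `(ab)^{2n} ∈ N`. -/
theorem heis_ramification (n : ℕ) (hn : 0 < n) :
    ∀ N : Subgroup (FreeGroup (Fin 2)),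
      N = Subgroup.normalClosure
        (let x : FreeGroup (Fin 2) := FreeGroup.of 0
         let y : FreeGroup (Fin 2) := FreeGroup.of 1
         let t : FreeGroup (Fin 2) := x * y * x⁻¹ * y⁻¹
         {x ^ n, y ^ n, x * t * x⁻¹ * t⁻¹, y * t * y⁻¹ * t⁻¹}) →
      (Odd n → (FreeGroup.of 0 * FreeGroup.of 1 : FreeGroup (Fin 2)) ^ n ∈ N) ∧
      (Even n → (FreeGroup.of 0 * FreeGroup.of 1 : FreeGroup (Fin 2)) ^ n ∉ N ∧
        (FreeGroup.of 0 * FreeGroup.of 1 : FreeGroup (Fin 2)) ^ (2 * n) ∈ N) := by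
  intro N hN
  set x : FreeGroup (Fin 2) := FreeGroup.of 0 with hx
  set y : FreeGroup (Fin 2) := FreeGroup.of 1 with hy
  set t : FreeGroup (Fin 2) := x * y * x⁻¹ * y⁻¹ with ht
  -- relators are in N
  have hxN : x ^ n ∈ N := hN ▸ Subgroup.subset_normalClosure (by simp)
  have hyN : y ^ n ∈ N := hN ▸ Subgroup.subset_normalClosure (by simp)
  have hxtN : x * t * x⁻¹ * t⁻¹ ∈ N := hN ▸ Subgroup.subset_normalClosure
    (by simp only [Set.mem_insert_iff, Set.mem_singleton_iff]; tauto)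
  have hytN : y * t * y⁻¹ * t⁻¹ ∈ N := hN ▸ Subgroup.subset_normalClosure
    (by simp only [Set.mem_insert_iff, Set.mem_singleton_iff]; tauto)
  have : N.Normal := hN ▸ Subgroup.normalClosure_normal
  -- work in the quotient
  let π := QuotientGroup.mk' N
  have hker : ∀ g : FreeGroup (Fin 2), π g = 1 ↔ g ∈ N := fun g =>
    QuotientGroup.eq_one_iff g
  set A := π x with hA
  set B := π y with hB
  set T := π t with hT'
  have hTdef : T = A * B * A⁻¹ * B⁻¹ := by simp [hT', ht, hA, hB]
  have hAn : A ^ n = 1 := by rw [hA, ← map_pow]; exact (hker _).2 hxN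
  have hBn : B ^ n = 1 := by rw [hB, ← map_pow]; exact (hker _).2 hyN
  have hTA : Commute T A := by
    have h1 : π (x * t * x⁻¹ * t⁻¹) = 1 := (hker _).2 hxtN
    have h2 : A * T * A⁻¹ * T⁻¹ = 1 := by simpa using h1
    unfold Commute SemiconjBy
    calc T * A = (A * T * A⁻¹ * T⁻¹) * (T * A) := by rw [h2]; group
      _ = A * T := by group
  have hTB : Commute T B := by
    have h1 : π (y * t * y⁻¹ * t⁻¹) = 1 := (hker _).2 hytN
    have h2 : B * T * B⁻¹ * T⁻¹ = 1 := by simpa using h1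
    unfold Commute SemiconjBy
    calc T * B = (B * T * B⁻¹ * T⁻¹) * (T * B) := by rw [h2]; group
      _ = B * T := by group
  have hTn : T ^ n = 1 := by
    have := aux_comm A B T hTdef hTB n
    rw [hBn] at this
    simp at this
    exact mul_right_cancel (b := A) (by simpa using this)
  have hmain : ∀ k : ℕ, n ∣ k.choose 2 → A ^ k = 1 → B ^ k = 1 → (A * B) ^ k = 1 := by
    intro k hdvd hAk hBk
    obtain ⟨c, hc⟩ := hdvd
    have h := aux_pow A B T hTdef hTA hTB k
    rw [hAk, hBk, hc, pow_mul, hTn, one_pow, one_mul] at h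
    simpa using h
  have memiff : ∀ k : ℕ, ((x * y) ^ k ∈ N ↔ (A * B) ^ k = 1) := by
    intro k
    rw [← hker]
    simp [hA, hB]
  constructor
  · -- odd case
    intro hodd
    rw [memiff]
    apply hmain n _ hAn hBn
    obtain ⟨m, hm⟩ := hodd
    rw [Nat.choose_two_right, show n - 1 = 2 * m by omega,
      show n * (2 * m) = 2 * (n * m) by ring,
      Nat.mul_div_cancel_left _ (by norm_num : 0 < 2)]
    exact dvd_mul_right n m
  · intro heven
    constructor
    · -- negative part via Heis
      intro hmem
      let φ : FreeGroup (Fin 2) →* Heis n :=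
        FreeGroup.lift (fun i => if i = 0 then Heis.a else Heis.b)
      have hφx : φ x = Heis.a := by simp [φ, hx]
      have hφy : φ y = Heis.b := by simp [φ, hy]
      have hNker : N ≤ φ.ker := by
        rw [hN]
        apply Subgroup.normalClosure_le_normal
        intro g hg
        simp only [Set.mem_insert_iff, Set.mem_singleton_iff] at hg
        have hφt : φ t = Heis.T := by
          rw [ht]; simp only [map_mul, map_inv, hφx, hφy]
          exact Heis.T_eq_commutator.symm
        rcases hg with h | h | h | h <;> subst h <;>
          simp only [SetLike.mem_coe, MonoidHom.mem_ker, map_mul, map_pow, map_inv,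
            hφx, hφy, hφt]
        · rw [Heis.a_pow]; ext <;> simp
        · rw [Heis.b_pow]; ext <;> simp
        · ext <;> simp [Heis.a, Heis.b, Heis.T]
        · ext <;> simp [Heis.b, Heis.a, Heis.T]
      have h1 : φ ((x * y) ^ n) = 1 := hNker hmem
      rw [map_pow, map_mul, hφx, hφy, Heis.ab_pow] at h1
      have hz : ((n : ZMod n) + (n.choose 2 : ZMod n)) = 0 := congrArg Heis.z h1
      rw [ZMod.natCast_self, zero_add] at hz
      have hz' : (n : ℕ) ∣ n.choose 2 := (ZMod.natCast_eq_zero_iff _ _).1 hz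
      obtain ⟨c, hc⟩ := hz'
      rw [Nat.choose_two_right] at hc
      have h2 : 2 * (n * (n - 1) / 2) = n * (n - 1) :=
        Nat.mul_div_cancel' (heven.two_dvd.mul_right (n - 1))
      have h3 : n * (n - 1) = 2 * (n * c) := by omega
      have h4 : n - 1 = 2 * c := Nat.eq_of_mul_eq_mul_left hn (by rw [h3]; ring)
      obtain ⟨m, hm⟩ := heven
      omega
    · rw [memiff]
      apply hmain
      · rw [Nat.choose_two_right,
          show 2 * n * (2 * n - 1) = 2 * (n * (2 * n - 1)) by ring,
          Nat.mul_div_cancel_left _ (by norm_num : 0 < 2)]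
        exact dvd_mul_right n _
      · rw [pow_mul', hAn, one_pow]
      · rw [pow_mul', hBn, one_pow]
end

section
/- Let n be odd. Every irreducible complex character χ of the Heisenberg group H_n restricted to the cyclic subgroup generated by ab contains the trivial character with multiplicity at most 1; specifically, for the degree-(n/gcd(n,j)) irreducible character χ_{ijs}, ⟨Res χ_{ijs}, 1⟩ over ⟨ab⟩ equals 1 if i + s ≡ 0 mod gcd(n,j) and 0 otherwise. -/
lemma heis_ab_pow (n k : ℕ) :
    (Heis.a * Heis.b : Heis n) ^ k =
      ⟨(k : ZMod n), (k : ZMod n), ((∑ m ∈ Finset.range (k+1), m : ℕ) : ZMod n)⟩ := by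
  induction k with
  | zero => ext <;> simp
  | succ k ih =>
    rw [pow_succ, ih]
    ext <;> simp [Heis.a, Heis.b, Finset.sum_range_succ] <;> push_cast <;> ring

/-- For odd `n`, the inner product of the restriction to `⟨ab⟩` of the irreducible
character `χ_{ijs}` of `H_n` with the trivial character equals `1` if
`i + s ≡ 0 mod gcd(n,j)` and `0` otherwise. -/
theorem heis_character_restriction (n j i s : ℕ) (hodd : Odd n) (hn : 0 < n)
    (hj : j < n) (hi : i < Nat.gcd n j) (hs : s < Nat.gcd n j) :
    (1 / (n : ℂ)) * ∑ k ∈ Finset.range n,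
        (fun p : Heis n =>
          if n / Nat.gcd n j ∣ p.x.val ∧ n / Nat.gcd n j ∣ p.y.val then
            ((n / Nat.gcd n j : ℕ) : ℂ) *
              Complex.exp (2 * Real.pi * Complex.I / n) ^
                (p.x.val * i + p.y.val * s + p.z.val * j)
          else 0) ((Heis.a * Heis.b : Heis n) ^ k)
      = if (i + s) % Nat.gcd n j = 0 then 1 else 0 := by
  haveI : NeZero n := ⟨hn.ne'⟩
  set g := Nat.gcd n j with hgdef
  have hg0 : 0 < g := Nat.gcd_pos_of_pos_left j hn
  set d := n / g with hddef
  have hdg : d * g = n := Nat.div_mul_cancel (Nat.gcd_dvd_left n j)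
  have hd0 : 0 < d := Nat.div_pos (Nat.le_of_dvd hn (Nat.gcd_dvd_left n j)) hg0
  set ζ : ℂ := Complex.exp (2 * Real.pi * Complex.I / n) with hζdef
  have hζ : IsPrimitiveRoot ζ n := Complex.isPrimitiveRoot_exp n hn.ne'
  set ω : ℂ := ζ ^ (d * (i + s)) with hωdef
  have hterm : ∀ k ∈ Finset.range n,
      (fun p : Heis n =>
        if d ∣ p.x.val ∧ d ∣ p.y.val then
          ((d : ℕ) : ℂ) * ζ ^ (p.x.val * i + p.y.val * s + p.z.val * j)
        else 0) ((Heis.a * Heis.b : Heis n) ^ k)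
      = if d ∣ k then ((d : ℕ) : ℂ) * ω ^ (k / d) else 0 := by
    intro k hk
    rw [Finset.mem_range] at hk
    rw [heis_ab_pow]
    simp only [ZMod.val_natCast, Nat.mod_eq_of_lt hk]
    by_cases hdk : d ∣ k
    · rw [if_pos ⟨hdk, hdk⟩, if_pos hdk]
      congr 1
      set w : ℕ := ∑ m ∈ Finset.range (k+1), m with hwdef
      have hzj : (n : ℕ) ∣ (w % n) * j := by
        have hnkj : n ∣ k * j := by
          obtain ⟨t, ht⟩ := hdk
          obtain ⟨u, hu⟩ := Nat.gcd_dvd_right n j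
          exact ⟨t * u, by rw [ht, hu, ← hgdef, ← hdg]; ring⟩
        have h2 : n ∣ ((w * j) * 2) := by
          have heq : w * j * 2 = (k * j) * (k + 1) := by
            rw [show w * j * 2 = (∑ m ∈ Finset.range (k+1), m) * 2 * j from by rw [hwdef]; ring,
              Finset.sum_range_id_mul_two]
            simp
            ring
          rw [heq]
          exact hnkj.mul_right _
        have hco : Nat.Coprime n 2 := by
          exact hodd.coprime_two_right
        have hwj : n ∣ w * j := hco.dvd_of_dvd_mul_right h2
        have hmcong : (w % n) * j % n = w * j % n :=
          Nat.ModEq.mul_right j (Nat.mod_modEq w n)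
        refine Nat.dvd_of_mod_eq_zero ?_
        rw [hmcong]
        obtain ⟨c, hc⟩ := hwj
        rw [hc, Nat.mul_mod_right]
      have h1 : ζ ^ ((w % n) * j) = 1 := by
        obtain ⟨c, hc⟩ := hzj
        rw [hc, pow_mul, hζ.pow_eq_one, one_pow]
      rw [pow_add, h1, mul_one, hωdef, ← pow_mul]
      congr 1
      obtain ⟨t, ht⟩ := hdk
      rw [ht, Nat.mul_div_cancel_left t hd0]
      ring
    · rw [if_neg (by tauto), if_neg hdk]
  rw [Finset.sum_congr rfl hterm]
  have hre : ∑ k ∈ Finset.range n, (if d ∣ k then ((d:ℕ):ℂ) * ω ^ (k / d) else 0)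
      = ∑ t ∈ Finset.range g, ((d:ℕ):ℂ) * ω ^ t := by
    rw [← Finset.sum_filter]
    refine Finset.sum_nbij' (fun k => k / d) (fun t => d * t) ?_ ?_ ?_ ?_ ?_
    · intro a ha
      simp only [Finset.mem_filter, Finset.mem_range] at ha ⊢
      obtain ⟨han, hda⟩ := ha
      exact Nat.div_lt_of_lt_mul (by omega)
    · intro t ht
      simp only [Finset.mem_filter, Finset.mem_range] at ht ⊢
      exact ⟨hdg ▸ (Nat.mul_lt_mul_left hd0).mpr ht, Dvd.intro t rfl⟩
    · intro a ha
      simp only [Finset.mem_filter] at ha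
      exact Nat.mul_div_cancel' ha.2
    · intro t _
      exact Nat.mul_div_cancel_left t hd0
    · intro a _
      rfl
  rw [hre, ← Finset.mul_sum]
  have hωg : ω ^ g = 1 := by
    rw [hωdef, ← pow_mul]
    have heq : d * (i + s) * g = n * (i + s) := by rw [← hdg]; ring
    rw [heq, pow_mul, hζ.pow_eq_one, one_pow]
  have hω1 : ω = 1 ↔ (i + s) % g = 0 := by
    rw [hωdef, hζ.pow_eq_one_iff_dvd, ← hdg, mul_dvd_mul_iff_left (by omega : d ≠ 0),
      Nat.dvd_iff_mod_eq_zero]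
  by_cases hc : (i + s) % g = 0
  · rw [if_pos hc, hω1.mpr hc]
    simp only [one_pow, Finset.sum_const, Finset.card_range, nsmul_eq_mul, mul_one]
    rw [← Nat.cast_mul, hdg, one_div, inv_mul_cancel₀ (Nat.cast_ne_zero.mpr hn.ne' : (n:ℂ) ≠ 0)]
  · rw [if_neg hc]
    have hωne : ω ≠ 1 := fun h => hc (hω1.mp h)
    rw [geom_sum_eq hωne, hωg]
    simp
end
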